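/- arXiv:2202.07573 — 8 statements merged into one kernel-verified Lean document; each statement's English description precedes it below -/
import Mathlib

section
/- Suppose V⁺ ≠ V⁻. Then there is no trajectory of the standing-wave system for the quantum hydrodynamics model with nonlinear viscosity connecting [V⁻,0] to [V⁺,0]; that is, there is no C² function V : ℝ → (0,∞) satisfying V''(y) = g(V(y))/k² for all y ∈ ℝ together with V(y) → V⁻, V'(y) → 0 as y → -∞ and V(y) → V⁺, V'(y) → 0 as y → +∞. -/
/-!
Along a profile, `V'^2/2 - G(V)/k²` is conserved, where `G` is a primitive of `g`; letting
`y → ±∞` gives `∫_{V⁻}^{V⁺} g = 0`. On the other hand, in the specific volume `τ = V⁻²` one has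
`g(V) = φ(τ) V` with `φ(τ) = C₁²τ²/2 + h(1/τ) + C₂` strictly convex, and the Rankine–Hugoniot
conditions say exactly that `φ` vanishes at `(V⁺)⁻²` and `(V⁻)⁻²`. Hence `g < 0` strictly between
`V⁻` and `V⁺`, and the integral cannot vanish.
-/

open Real Filter

noncomputable def enth (γ ρ : ℝ) : ℝ :=
  if γ = 1 then Real.log ρ else (γ / (γ - 1)) * ρ ^ (γ - 1)

open Set Topology

theorem hasDerivAt_integral_of_continuousOn {f : ℝ → ℝ} {U : Set ℝ} (hU : IsOpen U)
    [U.OrdConnected] (hf : ContinuousOn f U) {a x : ℝ} (ha : a ∈ U) (hx : x ∈ U) :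
    HasDerivAt (fun x => ∫ t in a..x, f t) (f x) x :=
  intervalIntegral.integral_hasDerivAt_right
    ((hf.mono (‹U.OrdConnected›.uIcc_subset ha hx)).intervalIntegrable)
    (hf.stronglyMeasurableAtFilter hU x hx) (hf.continuousAt (hU.mem_nhds hx))

theorem integral_eq_zero_of_heteroclinic {f V W : ℝ → ℝ} {U : Set ℝ} {a b : ℝ}
    (hU : IsOpen U) [U.OrdConnected] (hf : ContinuousOn f U) (hVU : ∀ y, V y ∈ U)
    (hV : ∀ y, HasDerivAt V (W y) y) (hW : ∀ y, HasDerivAt W (f (V y)) y)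
    (ha : a ∈ U) (hb : b ∈ U)
    (hVa : Tendsto V atBot (𝓝 a)) (hWa : Tendsto W atBot (𝓝 0))
    (hVb : Tendsto V atTop (𝓝 b)) (hWb : Tendsto W atTop (𝓝 0)) :
    ∫ t in a..b, f t = 0 := by
  set G : ℝ → ℝ := fun x => ∫ t in a..x, f t
  have hG (x) (hx : x ∈ U) : HasDerivAt G (f x) x :=
    hasDerivAt_integral_of_continuousOn hU hf ha hx
  set E : ℝ → ℝ := fun y => W y ^ 2 / 2 - G (V y)
  have hE (y) : HasDerivAt E 0 y := by
    have h := (((hW y).fun_pow 2).div_const 2).sub ((hG _ (hVU y)).comp y (hV y))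
    exact h.congr_deriv (by push_cast; ring)
  have hE_const : E = fun _ => E 0 := funext fun y =>
    is_const_of_deriv_eq_zero (fun y => (hE y).differentiableAt) (fun y => (hE y).deriv) y 0
  have hE_lim {l : Filter ℝ} [l.NeBot] {c : ℝ} (hc : c ∈ U) (hVc : Tendsto V l (𝓝 c))
      (hWc : Tendsto W l (𝓝 0)) : E 0 = -G c := by
    have hlim : Tendsto E l (𝓝 ((0 : ℝ) ^ 2 / 2 - G c)) :=
      ((hWc.pow 2).div_const 2).sub ((hG c hc).continuousAt.tendsto.comp hVc)
    rw [hE_const, tendsto_const_nhds_iff] at hlim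
    simpa using hlim
  simpa [G] using (hE_lim ha hVa hWa).symm.trans (hE_lim hb hVb hWb)

theorem continuousOn_enth (γ : ℝ) : ContinuousOn (enth γ) (Ioi 0) := by
  unfold enth
  split_ifs
  · exact continuousOn_log.mono fun x hx => ne_of_gt hx
  · exact continuousOn_const.mul (continuousOn_id.rpow_const fun x hx => Or.inl (ne_of_gt hx))

theorem hasDerivAt_enth_inv {γ s : ℝ} (hγ : 1 ≤ γ) (hs : 0 < s) :
    HasDerivAt (fun t => enth γ t⁻¹) (-γ * s ^ (-γ)) s := by
  rcases hγ.eq_or_lt with rfl | hγ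
  · have h : (fun t : ℝ => enth 1 t⁻¹) = fun t => -log t := by
      funext t
      simp [enth, log_inv]
    rw [h, rpow_neg_one, neg_one_mul]
    exact (hasDerivAt_log hs.ne').neg
  · have h : (fun t : ℝ => enth γ t⁻¹) =ᶠ[𝓝 s] fun t => γ / (γ - 1) * t ^ (1 - γ) := by
      filter_upwards [Ioi_mem_nhds hs] with t ht
      rw [enth, if_neg hγ.ne', inv_rpow ht.le, ← rpow_neg ht.le, neg_sub]
    refine HasDerivAt.congr_of_eventuallyEq ?_ h
    refine ((hasDerivAt_rpow_const (p := 1 - γ) (Or.inl hs.ne')).const_mul _).congr_deriv ?_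
    rw [sub_sub_cancel_left]
    field_simp [(sub_pos.2 hγ).ne']
    ring

theorem strictConvexOn_enth_inv {γ : ℝ} (hγ : 1 ≤ γ) :
    StrictConvexOn ℝ (Ioi 0) fun t => enth γ t⁻¹ := by
  refine StrictMonoOn.strictConvexOn_of_deriv (convex_Ioi 0)
    (fun s hs => (hasDerivAt_enth_inv hγ hs).continuousAt.continuousWithinAt) ?_
  rw [interior_Ioi]
  intro s hs t ht hst
  rw [(hasDerivAt_enth_inv hγ hs).deriv, (hasDerivAt_enth_inv hγ ht).deriv]
  have := rpow_lt_rpow_of_neg hs hst (by linarith : -γ < 0)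
  nlinarith

/-- With density `ρ = V²`, specific volume `τ = 1/ρ` and velocity `u = -C₁ τ`, this is the
Bernoulli function `u²/2 + h(ρ) + C₂`, so that `g(V) = bernoulliGap γ C₁ C₂ (V⁻²) * V`. -/
noncomputable def bernoulliGap (γ C₁ C₂ τ : ℝ) : ℝ := C₁ ^ 2 / 2 * τ ^ 2 + enth γ τ⁻¹ + C₂

theorem bernoulliGap_inv_sq (γ C₁ C₂ : ℝ) {V : ℝ} (hV : V ≠ 0) :
    bernoulliGap γ C₁ C₂ (V ^ 2)⁻¹ = C₁ ^ 2 / (2 * V ^ 4) + enth γ (V ^ 2) + C₂ := by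
  rw [bernoulliGap, inv_inv]
  field_simp

theorem bernoulliGap_inv_sq_eq_zero {γ C₁ C₂ V u : ℝ} (hV : 0 < V) (hC₁ : C₁ = -u * V ^ 2)
    (hC₂ : C₂ = -u ^ 2 / 2 - enth γ (V ^ 2)) : bernoulliGap γ C₁ C₂ (V ^ 2)⁻¹ = 0 := by
  rw [bernoulliGap_inv_sq γ C₁ C₂ hV.ne', hC₁, hC₂]
  field_simp
  ring

theorem continuousOn_bernoulliGap (γ C₁ C₂ : ℝ) :
    ContinuousOn (bernoulliGap γ C₁ C₂) (Ioi 0) := by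
  have henth : ContinuousOn (fun τ : ℝ => enth γ τ⁻¹) (Ioi 0) :=
    (continuousOn_enth γ).comp (continuousOn_inv₀.mono fun _ hτ => ne_of_gt hτ)
      fun _ hτ => mem_Ioi.2 (inv_pos.2 hτ)
  exact ((continuousOn_const.mul (continuous_pow 2).continuousOn).add henth).add continuousOn_const

theorem strictConvexOn_bernoulliGap {γ : ℝ} (hγ : 1 ≤ γ) (C₁ C₂ : ℝ) :
    StrictConvexOn ℝ (Ioi 0) (bernoulliGap γ C₁ C₂) := by
  have hsq : ConvexOn ℝ (Ioi 0) fun τ : ℝ => C₁ ^ 2 / 2 * τ ^ 2 :=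
    ((even_two.convexOn_pow).subset (subset_univ _) (convex_Ioi 0)).smul (by positivity)
  exact (hsq.add_strictConvexOn (strictConvexOn_enth_inv hγ)).add_const C₂

theorem StrictConvexOn.neg_of_mem_uIoo {s : Set ℝ} {f : ℝ → ℝ} (hf : StrictConvexOn ℝ s f)
    {a b x : ℝ} (ha : a ∈ s) (hb : b ∈ s) (hfa : f a = 0) (hfb : f b = 0) (hx : x ∈ uIoo a b) :
    f x < 0 := by
  have hab : a ≠ b := by
    rintro rfl
    simp at hx
  simpa [hfa, hfb] using hf.lt_on_openSegment ha hb hab (by rwa [openSegment_eq_Ioo' hab])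

theorem StrictAntiOn.mapsTo_uIoo {s : Set ℝ} [s.OrdConnected] {f : ℝ → ℝ} (hf : StrictAntiOn f s)
    {a b : ℝ} (ha : a ∈ s) (hb : b ∈ s) : MapsTo f (uIoo a b) (uIoo (f a) (f b)) := by
  wlog hab : a ≤ b generalizing a b
  · simpa only [uIoo_comm] using this hb ha (le_of_not_ge hab)
  intro x hx
  rw [uIoo_of_le hab] at hx
  have hx_mem : x ∈ s := ‹s.OrdConnected›.out ha hb (Ioo_subset_Icc_self hx)
  rw [uIoo_of_ge (hf.antitoneOn ha hb hab)]
  exact ⟨hf hx_mem hb hx.2, hf ha hx_mem hx.1⟩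

theorem strictAntiOn_inv_sq : StrictAntiOn (fun t : ℝ => (t ^ 2)⁻¹) (Ioi 0) :=
  fun _ hs _ _ hst => inv_strictAnti₀ (pow_pos hs 2) (pow_lt_pow_left₀ hst hs.le two_ne_zero)

theorem intervalIntegral_ne_zero_of_neg_on_uIoo {f : ℝ → ℝ} {a b : ℝ} (hab : a ≠ b)
    (hf : ContinuousOn f (uIcc a b)) (hneg : ∀ x ∈ uIoo a b, f x < 0) :
    ∫ x in a..b, f x ≠ 0 := by
  wlog hlt : a < b generalizing a b
  · rw [intervalIntegral.integral_symm, neg_ne_zero]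
    exact this hab.symm (uIcc_comm a b ▸ hf) (uIoo_comm a b ▸ hneg) (hab.lt_or_gt.resolve_left hlt)
  have hpos : 0 < ∫ x in a..b, -f x :=
    intervalIntegral.intervalIntegral_pos_of_pos_on hf.neg.intervalIntegrable
      (fun x hx => neg_pos.2 (hneg x (uIoo_of_lt hlt ▸ hx))) hlt
  rw [intervalIntegral.integral_neg] at hpos
  exact (neg_pos.1 hpos).ne

/-- Non-existence of heteroclinic connections for the standing-wave system of the
QHD model with nonlinear viscosity, when `V⁺ ≠ V⁻`. -/
theorem no_heteroclinic_nonlinear_viscosity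
    (γ k Vp Vm up um : ℝ)
    (hγ : 1 ≤ γ) (hk : 0 < k) (hVp : 0 < Vp) (hVm : 0 < Vm)
    (hRH1 : Vp ^ 2 * up = Vm ^ 2 * um)
    (hRH2 : up ^ 2 / 2 + enth γ (Vp ^ 2) = um ^ 2 / 2 + enth γ (Vm ^ 2))
    (hne : Vp ≠ Vm)
    (C₁ C₂ : ℝ) (hC₁ : C₁ = -up * Vp ^ 2)
    (hC₂ : C₂ = -up ^ 2 / 2 - enth γ (Vp ^ 2))
    (g : ℝ → ℝ)
    (hg : ∀ V : ℝ, 0 < V → g V = (C₁ ^ 2 / (2 * V ^ 4) + enth γ (V ^ 2) + C₂) * V) :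
    ¬ ∃ V : ℝ → ℝ, ContDiff ℝ 2 V ∧ (∀ y, 0 < V y) ∧
      (∀ y, deriv (deriv V) y = g (V y) / k ^ 2) ∧
      Tendsto V atBot (nhds Vm) ∧ Tendsto (deriv V) atBot (nhds 0) ∧
      Tendsto V atTop (nhds Vp) ∧ Tendsto (deriv V) atTop (nhds 0) := by
  rintro ⟨V, hV, hV_pos, hV_ode, hVm_lim, hV'm_lim, hVp_lim, hV'p_lim⟩
  have hg_gap : EqOn g (fun t => bernoulliGap γ C₁ C₂ (t ^ 2)⁻¹ * t) (Ioi 0) := fun t ht => by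
    simp only [hg t ht, bernoulliGap_inv_sq γ C₁ C₂ (ne_of_gt ht)]
  have hg_cont : ContinuousOn g (Ioi 0) := by
    refine ContinuousOn.congr ?_ hg_gap
    refine ((continuousOn_bernoulliGap γ C₁ C₂).comp ?_ fun t ht => ?_).mul continuousOn_id
    · exact (continuous_pow 2).continuousOn.inv₀ fun t ht => pow_ne_zero 2 (ne_of_gt ht)
    · exact inv_pos.2 (pow_pos (mem_Ioi.1 ht) 2)
  have hint : ∫ t in Vm..Vp, g t / k ^ 2 = 0 :=
    integral_eq_zero_of_heteroclinic isOpen_Ioi (hg_cont.div_const _) hV_pos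
      (fun y => (hV.differentiable two_ne_zero y).hasDerivAt)
      (fun y => hV_ode y ▸ (hV.differentiable_deriv_two y).hasDerivAt)
      hVm hVp hVm_lim hV'm_lim hVp_lim hV'p_lim
  rw [intervalIntegral.integral_div, div_eq_zero_iff, or_iff_left (by positivity)] at hint
  have hgap_p := bernoulliGap_inv_sq_eq_zero hVp hC₁ hC₂
  have hgap_m : bernoulliGap γ C₁ C₂ (Vm ^ 2)⁻¹ = 0 :=
    bernoulliGap_inv_sq_eq_zero (u := um) hVm (by rw [hC₁]; linarith) (by rw [hC₂]; linarith)
  have hsub : uIcc Vm Vp ⊆ Ioi 0 := ordConnected_Ioi.uIcc_subset hVm hVp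
  refine intervalIntegral_ne_zero_of_neg_on_uIoo hne.symm (hg_cont.mono hsub) (fun t ht => ?_) hint
  have ht_pos : 0 < t := hsub (uIoo_subset_uIcc_self ht)
  rw [hg_gap ht_pos]
  refine mul_neg_of_neg_of_pos ?_ ht_pos
  exact (strictConvexOn_bernoulliGap hγ C₁ C₂).neg_of_mem_uIoo (mem_Ioi.2 (by positivity))
    (mem_Ioi.2 (by positivity)) hgap_m hgap_p (strictAntiOn_inv_sq.mapsTo_uIoo hVm hVp ht)
end

section
/- Suppose s = 0 and P⁺ ≠ P⁻. Then there is no trajectory of the standing-wave system for the quantum hydrodynamics model with linear viscosity connecting [P⁻,0] to [P⁺,0]; that is, there is no C² function P : ℝ → (0,∞) satisfying P''(y) = (2/k²) f(P(y)) + (P'(y))²/P(y) for all y ∈ ℝ together with P(y) → P⁻, P'(y) → 0 as y → -∞ and P(y) → P⁺, P'(y) → 0 as y → +∞. -/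
open Real Filter Set

/-! With `u = P' / P` the profile equation reads `u' = (2 / k²) f(P) / P`, so
`u² / 2 - (2 / k²) W(P)` is conserved, where `W' = f(p) / p²`. Letting `y → ±∞` gives
`W(P⁻) = W(P⁺)`. But `p f(p) = p^(γ+1) - B p + A²` is strictly convex and, by the
Rankine–Hugoniot conditions, vanishes at `P⁻` and `P⁺`; hence `f < 0` strictly between the end
states and `W` is strictly decreasing there. -/

lemma StrictConvexOn.neg_of_mem_Ioo {s : Set ℝ} {h : ℝ → ℝ} (hh : StrictConvexOn ℝ s h)
    {a b x : ℝ} (ha : a ∈ s) (hb : b ∈ s) (hha : h a = 0) (hhb : h b = 0) (hx : x ∈ Ioo a b) :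
    h x < 0 := by
  have hab : a < b := hx.1.trans hx.2
  simpa [hha, hhb] using hh.lt_on_openSegment ha hb hab.ne (by rwa [openSegment_eq_Ioo hab])

lemma hasDerivAt_integral_one_of_continuousOn_Ioi {g : ℝ → ℝ} (hg : ContinuousOn g (Ioi 0))
    {p : ℝ} (hp : 0 < p) : HasDerivAt (fun q => ∫ t in (1 : ℝ)..q, g t) (g p) p := by
  have hsub : uIcc 1 p ⊆ Ioi 0 := fun x hx => lt_of_lt_of_le (lt_min one_pos hp) hx.1
  exact intervalIntegral.integral_hasDerivAt_right (hg.mono hsub).intervalIntegrable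
    (hg.stronglyMeasurableAtFilter isOpen_Ioi p hp) (hg.continuousAt (Ioi_mem_nhds hp))

section StandingWave

variable {c : ℝ} {φ G P : ℝ → ℝ}

noncomputable def waveEnergy (c : ℝ) (G P : ℝ → ℝ) (y : ℝ) : ℝ :=
  (deriv P y / P y) ^ 2 / 2 - c * G (P y)

lemma hasDerivAt_waveEnergy (hG : ∀ p, 0 < p → HasDerivAt G (φ p / p ^ 2) p)
    (hP : Differentiable ℝ P) (hP' : Differentiable ℝ (deriv P)) (hpos : ∀ y, 0 < P y)
    (hode : ∀ y, deriv (deriv P) y = c * φ (P y) + deriv P y ^ 2 / P y) (y : ℝ) :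
    HasDerivAt (waveEnergy c G P) 0 y := by
  have hPy : P y ≠ 0 := (hpos y).ne'
  have hu := (hP' y).hasDerivAt
  rw [hode y] at hu
  have := (((hu.div (hP y).hasDerivAt hPy).pow 2).div_const 2).sub
    (((hG (P y) (hpos y)).comp y (hP y).hasDerivAt).const_mul c)
  refine this.congr_deriv ?_
  norm_num only [Pi.div_apply, Nat.cast_ofNat, pow_one]
  field_simp
  ring

lemma waveEnergy_eq (hG : ∀ p, 0 < p → HasDerivAt G (φ p / p ^ 2) p)
    (hP : Differentiable ℝ P) (hP' : Differentiable ℝ (deriv P)) (hpos : ∀ y, 0 < P y)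
    (hode : ∀ y, deriv (deriv P) y = c * φ (P y) + deriv P y ^ 2 / P y) (y z : ℝ) :
    waveEnergy c G P y = waveEnergy c G P z :=
  is_const_of_deriv_eq_zero
    (fun y => (hasDerivAt_waveEnergy hG hP hP' hpos hode y).differentiableAt)
    (fun y => (hasDerivAt_waveEnergy hG hP hP' hpos hode y).deriv) y z

lemma tendsto_waveEnergy {l : Filter ℝ} {Q : ℝ} (hQ : Q ≠ 0) (hGQ : ContinuousAt G Q)
    (hPQ : Tendsto P l (nhds Q)) (hP'0 : Tendsto (deriv P) l (nhds 0)) :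
    Tendsto (waveEnergy c G P) l (nhds (-(c * G Q))) := by
  have := (((hP'0.div hPQ hQ).pow 2).div_const 2).sub ((hGQ.tendsto.comp hPQ).const_mul c)
  convert this using 2
  · rfl
  · simp

lemma potential_eq_of_heteroclinic (hc : c ≠ 0)
    (hG : ∀ p, 0 < p → HasDerivAt G (φ p / p ^ 2) p)
    (hP : Differentiable ℝ P) (hP' : Differentiable ℝ (deriv P)) (hpos : ∀ y, 0 < P y)
    (hode : ∀ y, deriv (deriv P) y = c * φ (P y) + deriv P y ^ 2 / P y) {Qm Qp : ℝ}
    (hQm : 0 < Qm) (hQp : 0 < Qp) (hPm : Tendsto P atBot (nhds Qm))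
    (hP'm : Tendsto (deriv P) atBot (nhds 0)) (hPp : Tendsto P atTop (nhds Qp))
    (hP'p : Tendsto (deriv P) atTop (nhds 0)) : G Qm = G Qp := by
  have hconst : waveEnergy c G P = fun _ => waveEnergy c G P 0 :=
    funext fun y => waveEnergy_eq hG hP hP' hpos hode y 0
  have hbot := tendsto_waveEnergy (c := c) hQm.ne' (hG Qm hQm).continuousAt hPm hP'm
  have htop := tendsto_waveEnergy (c := c) hQp.ne' (hG Qp hQp).continuousAt hPp hP'p
  rw [hconst, tendsto_const_nhds_iff] at hbot htop
  exact mul_left_cancel₀ hc (neg_inj.1 (hbot.symm.trans htop))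

end StandingWave

lemma rpow_sub_add_sq_div_neg_of_mem_Ioo {γ A B a b x : ℝ} (hγ : 0 < γ) (ha : 0 < a)
    (hfa : a ^ γ - B + A ^ 2 / a = 0) (hfb : b ^ γ - B + A ^ 2 / b = 0) (hx : x ∈ Ioo a b) :
    x ^ γ - B + A ^ 2 / x < 0 := by
  have hconv : StrictConvexOn ℝ (Ioi 0) (fun p => p * (p ^ γ - B + A ^ 2 / p)) := by
    have hrpow := (strictConvexOn_rpow (lt_add_of_pos_left 1 hγ)).subset Ioi_subset_Ici_self
      (convex_Ioi 0)
    refine ((hrpow.add_convexOn (((-B) • LinearMap.id : ℝ →ₗ[ℝ] ℝ).convexOn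
      (convex_Ioi 0))).add_const (A ^ 2)).congr fun p hp => ?_
    have hp0 : p ≠ 0 := ne_of_gt hp
    simp only [LinearMap.coe_smul, LinearMap.id_coe, Pi.add_apply, Pi.smul_apply, id_eq,
      smul_eq_mul, rpow_add_one hp0]
    field_simp
    ring
  have hx0 : 0 < x := ha.trans hx.1
  have := hconv.neg_of_mem_Ioo ha (hx0.trans hx.2) (by simp [hfa]) (by simp [hfb]) hx
  exact neg_of_mul_neg_right this hx0.le

lemma potential_lt_of_roots {γ A B a b : ℝ} {f G : ℝ → ℝ} (hγ : 0 < γ) (ha : 0 < a)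
    (hab : a < b) (hf : ∀ p, 0 < p → f p = p ^ γ - B + A ^ 2 / p) (hfa : f a = 0)
    (hfb : f b = 0) (hG : ∀ p, 0 < p → HasDerivAt G (f p / p ^ 2) p) : G b < G a := by
  have hpos : ∀ x ∈ Icc a b, 0 < x := fun x hx => ha.trans_le hx.1
  refine strictAntiOn_of_hasDerivWithinAt_neg (convex_Icc a b)
    (fun x hx => (hG x (hpos x hx)).continuousAt.continuousWithinAt)
    (fun x hx => (hG x (hpos x (interior_subset hx))).hasDerivWithinAt) (fun x hx => ?_)
    (left_mem_Icc.2 hab.le) (right_mem_Icc.2 hab.le) hab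
  rw [interior_Icc] at hx
  have hx0 : 0 < x := ha.trans hx.1
  rw [hf x hx0]
  exact div_neg_of_neg_of_pos (rpow_sub_add_sq_div_neg_of_mem_Ioo hγ ha
    ((hf a ha).symm.trans hfa) ((hf b (ha.trans hab)).symm.trans hfb) hx) (by positivity)

/-- Non-existence of heteroclinic connections for the standing-wave (`s = 0`) system of
the QHD model with linear viscosity, when `P⁺ ≠ P⁻`. -/
theorem no_heteroclinic_linear_viscosity
    (γ k Pp Pm Jp Jm : ℝ)
    (hγ : 1 ≤ γ) (hk : 0 < k) (hPp : 0 < Pp) (hPm : 0 < Pm)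
    (hRH1 : Jp - Jm = 0)
    (hRH2 : (Jp ^ 2 / Pp + Pp ^ γ) - (Jm ^ 2 / Pm + Pm ^ γ) = 0)
    (hne : Pp ≠ Pm)
    (A B : ℝ) (hA : A = -Jp) (hB : B = Jp ^ 2 / Pp + Pp ^ γ)
    (f : ℝ → ℝ) (hf : ∀ P : ℝ, 0 < P → f P = P ^ γ - B + A ^ 2 / P) :
    ¬ ∃ P : ℝ → ℝ, ContDiff ℝ 2 P ∧ (∀ y, 0 < P y) ∧
      (∀ y, deriv (deriv P) y = (2 / k ^ 2) * f (P y) + (deriv P y) ^ 2 / P y) ∧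
      Tendsto P atBot (nhds Pm) ∧ Tendsto (deriv P) atBot (nhds 0) ∧
      Tendsto P atTop (nhds Pp) ∧ Tendsto (deriv P) atTop (nhds 0) := by
  rintro ⟨P, hC2, hpos, hode, hPm_lim, hPm'_lim, hPp_lim, hPp'_lim⟩
  have hfc : ContinuousOn f (Ioi 0) := by
    have hformula : ContinuousOn (fun p : ℝ => p ^ γ - B + A ^ 2 / p) (Ioi 0) :=
      continuousOn_of_forall_continuousAt fun p hp =>
        ((continuousAt_id.rpow_const (Or.inl (ne_of_gt hp))).sub continuousAt_const).add
          (continuousAt_const.div continuousAt_id (ne_of_gt hp))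
    exact hformula.congr hf
  set G : ℝ → ℝ := fun q => ∫ t in (1 : ℝ)..q, f t / t ^ 2
  have hG : ∀ p, 0 < p → HasDerivAt G (f p / p ^ 2) p := fun p =>
    hasDerivAt_integral_one_of_continuousOn_Ioi
      (hfc.div (continuousOn_pow 2) fun t ht => pow_ne_zero 2 (ne_of_gt ht))
  have hGeq : G Pm = G Pp := potential_eq_of_heteroclinic (by positivity) hG
    (hC2.differentiable two_ne_zero) hC2.differentiable_deriv_two hpos hode
    hPm hPp hPm_lim hPm'_lim hPp_lim hPp'_lim
  have hfPp : f Pp = 0 := by rw [hf Pp hPp, hB, hA]; ring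
  have hfPm : f Pm = 0 := by
    have hJ : Jm = Jp := by linarith
    rw [hJ] at hRH2
    rw [hf Pm hPm, hB, hA, neg_sq]
    linarith
  have hγ0 : 0 < γ := by linarith
  rcases hne.lt_or_gt with h | h
  · exact (potential_lt_of_roots hγ0 hPp h hf hfPp hfPm hG).ne hGeq
  · exact (potential_lt_of_roots hγ0 hPm h hf hfPm hfPp hG).ne' hGeq
end

section
/- If the end states P⁺, P⁻ > 0 and J⁺, J⁻ ∈ ℝ and the speed s ∈ ℝ satisfy the Rankine–Hugoniot conditions and P⁺ ≠ P⁻, then A := sP⁺ - J⁺ ≠ 0. -/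
/-- If the Rankine–Hugoniot conditions hold and `P⁺ ≠ P⁻`, then `A = sP⁺ - J⁺ ≠ 0`. -/
theorem A_ne_zero_of_rankine_hugoniot
    (γ s Pp Pm Jp Jm : ℝ) (hγ : 1 ≤ γ)
    (hPp : 0 < Pp) (hPm : 0 < Pm)
    (hRH1 : Jp - Jm = s * (Pp - Pm))
    (hRH2 : (Jp ^ 2 / Pp + Pp ^ γ) - (Jm ^ 2 / Pm + Pm ^ γ) = s * (Jp - Jm))
    (hne : Pp ≠ Pm) :
    s * Pp - Jp ≠ 0 := by
  intro h
  have hJp : Jp = s * Pp := by linarith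
  have hJm : Jm = s * Pm := by
    have := hRH1
    nlinarith
  have hpow : Pp ^ γ = Pm ^ γ := by
    rw [hJp, hJm] at hRH2 hRH1
    field_simp at hRH2
    nlinarith [mul_pos hPp hPm, sq_nonneg s]
  have hγ0 : γ ≠ 0 := by linarith
  have : Pp = Pm := by
    have h1 : (Pp ^ γ) ^ (1/γ) = (Pm ^ γ) ^ (1/γ) := by rw [hpow]
    rwa [one_div, Real.rpow_rpow_inv hPp.le hγ0, Real.rpow_rpow_inv hPm.le hγ0] at h1
  exact hne this
end

section
/- Let γ ≥ 1, let P⁺, P⁻ > 0 with P⁺ ≠ P⁻, and define f(P) = P^γ + (P⁻P⁺/P)·((P⁺)^γ - (P⁻)^γ)/(P⁺ - P⁻) - ((P⁺)^(γ+1) - (P⁻)^(γ+1))/(P⁺ - P⁻) for P > 0. Then f(P⁺) = f(P⁻) = 0, f''(P) > 0 for all P > 0, and P⁺ and P⁻ are the only zeros of f on (0,∞). -/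
/-!
With `C` and `D` the secant slopes of `t ^ γ` and `t ^ (γ + 1)` between `P⁻` and `P⁺`,
`f P = P ^ γ + P⁻ P⁺ C / P - D`. The product rule for slopes of `t * t ^ γ` gives
`D = (P⁺) ^ γ + P⁻ C = (P⁻) ^ γ + P⁺ C`, which is exactly `f P⁺ = f P⁻ = 0`.
Since `t ^ γ` is increasing, `C > 0`, so `f'' P = γ (γ - 1) P ^ (γ - 2) + 2 P⁻ P⁺ C / P ^ 3 > 0`;
a strictly convex function takes each value at most twice.
-/

open Real Set

theorem slope_id_mul {k : Type*} [Field k] (h : k → k) {a b : k} (hab : a ≠ b) :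
    slope (fun t => t * h t) a b = h b + a * slope h a b := by
  rw [slope_def_field, slope_def_field]
  field_simp [sub_ne_zero.2 hab.symm]
  ring

theorem slope_rpow_add_one {γ a b : ℝ} (ha : a ≠ 0) (hb : b ≠ 0) (hab : a ≠ b) :
    slope (· ^ (γ + 1)) a b = b ^ γ + a * slope (· ^ γ) a b := by
  rw [← slope_id_mul (· ^ γ) hab, slope_def_field, slope_def_field, rpow_add_one ha,
    rpow_add_one hb, mul_comm a, mul_comm b]

theorem StrictConvexOn.eq_or_eq_of_eq {𝕜 β : Type*} [Field 𝕜] [LinearOrder 𝕜]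
    [IsStrictOrderedRing 𝕜] [AddCommMonoid β] [LinearOrder β] [IsOrderedAddMonoid β]
    [Module 𝕜 β] [PosSMulStrictMono 𝕜 β] {s : Set 𝕜} {f : 𝕜 → β} (hf : StrictConvexOn 𝕜 s f)
    {x y z : 𝕜} {c : β} (hx : x ∈ s) (hy : y ∈ s) (hz : z ∈ s) (hxy : x ≠ y)
    (hfx : f x = c) (hfy : f y = c) (hfz : f z = c) : z = x ∨ z = y := by
  have middle : ∀ {a b d}, a ∈ s → d ∈ s → a < b → b < d →
      f a = c → f b = c → f d = c → False :=
    fun ha hd hab hbd hfa hfb hfd => by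
      have := hf.lt_on_openSegment ha hd (hab.trans hbd).ne
        (by rw [openSegment_eq_Ioo (hab.trans hbd)]; exact ⟨hab, hbd⟩)
      simp [hfa, hfb, hfd] at this
  wlog hlt : x < y generalizing x y
  · exact (this hy hx hxy.symm hfy hfx ((not_lt.1 hlt).lt_of_ne hxy.symm)).symm
  rcases lt_trichotomy z x with hzx | rfl | hxz
  · exact (middle hz hy hzx hlt hfz hfx hfy).elim
  · exact Or.inl rfl
  rcases lt_trichotomy z y with hzy | rfl | hyz
  · exact (middle hx hy hxz hzy hfx hfz hfy).elim
  · exact Or.inr rfl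
  · exact (middle hx hz hlt hyz hfx hfy hfz).elim

section RpowAddDiv

variable {γ A D P : ℝ}

theorem hasDerivAt_rpow_add_div (hP : P ≠ 0) :
    HasDerivAt (fun Q => Q ^ γ + A / Q - D) (γ * P ^ (γ - 1) - A / P ^ 2) P := by
  have := ((hasDerivAt_rpow_const (p := γ) (Or.inl hP)).fun_add
    ((hasDerivAt_inv hP).const_mul A)).sub_const D
  simpa only [← div_eq_mul_inv, mul_neg, ← sub_eq_add_neg] using this

theorem hasDerivAt_mul_rpow_sub_div_sq (hP : P ≠ 0) :
    HasDerivAt (fun Q => γ * Q ^ (γ - 1) - A / Q ^ 2)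
      (γ * (γ - 1) * P ^ (γ - 2) + 2 * A / P ^ 3) P := by
  have := ((hasDerivAt_rpow_const (p := γ - 1) (Or.inl hP)).const_mul γ).fun_sub
    (((hasDerivAt_pow 2 P).fun_inv (pow_ne_zero 2 hP)).const_mul A)
  simp only [← div_eq_mul_inv] at this
  refine this.congr_deriv ?_
  rw [show γ - 1 - 1 = γ - 2 by ring]
  field_simp
  ring

theorem deriv_deriv_rpow_add_div (hP : P ≠ 0) :
    deriv (deriv fun Q => Q ^ γ + A / Q - D) P = γ * (γ - 1) * P ^ (γ - 2) + 2 * A / P ^ 3 := by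
  have hderiv : EqOn (deriv fun Q => Q ^ γ + A / Q - D) (fun Q => γ * Q ^ (γ - 1) - A / Q ^ 2)
      {0}ᶜ := fun Q hQ => (hasDerivAt_rpow_add_div hQ).deriv
  rw [hderiv.deriv isOpen_compl_singleton hP,
    (hasDerivAt_mul_rpow_sub_div_sq hP).deriv]

end RpowAddDiv

/-- Properties of `f(P) = P^γ + (P⁻P⁺/P)·((P⁺)^γ-(P⁻)^γ)/(P⁺-P⁻)
- ((P⁺)^(γ+1)-(P⁻)^(γ+1))/(P⁺-P⁻)`: the end states are its only positive zeros and it is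
strictly convex on `(0,∞)`. -/
theorem f_zeros_and_convexity
    (γ Pp Pm : ℝ) (hγ : 1 ≤ γ) (hPp : 0 < Pp) (hPm : 0 < Pm) (hne : Pp ≠ Pm)
    (f : ℝ → ℝ)
    (hf : ∀ P : ℝ, 0 < P →
      f P = P ^ γ + (Pm * Pp / P) * ((Pp ^ γ - Pm ^ γ) / (Pp - Pm)) -
        (Pp ^ (γ + 1) - Pm ^ (γ + 1)) / (Pp - Pm)) :
    f Pp = 0 ∧ f Pm = 0 ∧
    (∀ P : ℝ, 0 < P → 0 < deriv (deriv f) P) ∧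
    (∀ P : ℝ, 0 < P → f P = 0 → P = Pp ∨ P = Pm) := by
  set C := slope (· ^ γ) Pm Pp with hC
  set D := slope (· ^ (γ + 1)) Pm Pp with hD
  have hfg : EqOn f (fun P => P ^ γ + Pm * Pp * C / P - D) (Ioi 0) := fun P hP => by
    rw [hf P hP, hC, hD, slope_def_field, slope_def_field]
    ring
  have hC_pos : 0 < C :=
    (strictMonoOn_rpow_Ici_of_exponent_pos (by linarith)).slope_pos hPm.le hPp.le hne.symm
  have hf'' : ∀ P : ℝ, 0 < P → 0 < deriv (deriv f) P := fun P hP => by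
    rw [(hfg.deriv isOpen_Ioi).deriv isOpen_Ioi hP, deriv_deriv_rpow_add_div hP.ne']
    have := sub_nonneg.2 hγ
    positivity
  have hcont : ContinuousOn f (Ioi 0) := fun P hP =>
    (hasDerivAt_rpow_add_div (ne_of_gt hP)).continuousAt.continuousWithinAt.congr hfg (hfg hP)
  have hconv : StrictConvexOn ℝ (Ioi 0) f :=
    strictConvexOn_of_deriv2_pos' (convex_Ioi 0) hcont hf''
  have hfPp : f Pp = 0 := by
    rw [hfg hPp, hD, slope_rpow_add_one hPm.ne' hPp.ne' hne.symm]
    field_simp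
    ring
  have hfPm : f Pm = 0 := by
    rw [hfg hPm, hD, slope_comm, slope_rpow_add_one hPp.ne' hPm.ne' hne, hC, slope_comm]
    field_simp
    ring
  exact ⟨hfPp, hfPm, hf'', fun P hP hfP => hconv.eq_or_eq_of_eq hPp hPm hP hne hfPp hfPm hfP⟩
end

section
/- Let γ ≥ 1, let V⁺, V⁻ > 0 with V⁺ ≠ V⁻, and define g(V) = ( ((V⁺V⁻)⁴/V⁴)·(h((V⁺)²) - h((V⁻)²))/((V⁺)⁴ - (V⁻)⁴) + h(V²) - ((V⁺)⁴ h((V⁺)²) - (V⁻)⁴ h((V⁻)²))/((V⁺)⁴ - (V⁻)⁴) )·V for V > 0. Then g(V⁺) = g(V⁻) = 0, g''(V) > 0 for all V > 0, and V⁺ and V⁻ are the only zeros of g on (0,∞). -/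
open Real

/-!
On `(0, ∞)`, `g V = (C / V⁴ + h(V²) - B) V` with `C = (V⁺V⁻)⁴ A` and `A` the slope
`(h((V⁺)²) - h((V⁻)²)) / ((V⁺)⁴ - (V⁻)⁴)`, which is positive because `h` is increasing.
Both branches of `h` have derivative `h'(ρ) = γ ρ^(γ-2)`, so
`g'' V = 12 C / V⁵ + 2γ(2γ - 1) V (V²)^(γ-2) > 0`. The zeros at `V⁺, V⁻` are a direct
computation, and a strictly convex function takes each value at most twice.
-/

open Set

theorem StrictConvexOn.lt_max_of_lt_of_lt {𝕜 β : Type*} [Field 𝕜] [LinearOrder 𝕜]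
    [IsStrictOrderedRing 𝕜] [AddCommMonoid β] [LinearOrder β] [IsOrderedAddMonoid β]
    [Module 𝕜 β] [PosSMulStrictMono 𝕜 β] {s : Set 𝕜} {f : 𝕜 → β}
    (hf : StrictConvexOn 𝕜 s f) {x y z : 𝕜} (hx : x ∈ s) (hz : z ∈ s) (hxy : x < y)
    (hyz : y < z) :
    f y < max (f x) (f z) :=
  hf.lt_on_openSegment hx hz (hxy.trans hyz).ne (Ioo_subset_openSegment ⟨hxy, hyz⟩)

theorem StrictConvexOn.eq_or_eq_of_apply_eq {𝕜 β : Type*} [Field 𝕜] [LinearOrder 𝕜]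
    [IsStrictOrderedRing 𝕜] [AddCommMonoid β] [LinearOrder β] [IsOrderedAddMonoid β]
    [Module 𝕜 β] [PosSMulStrictMono 𝕜 β] {s : Set 𝕜} {f : 𝕜 → β}
    (hf : StrictConvexOn 𝕜 s f) {x y z : 𝕜} (hx : x ∈ s) (hy : y ∈ s) (hz : z ∈ s)
    (hxy : x ≠ y) {c : β} (hfx : f x = c) (hfy : f y = c) (hfz : f z = c) : z = x ∨ z = y := by
  wlog hlt : x < y generalizing x y
  · exact (this hy hx hxy.symm hfy hfx (hxy.lt_or_gt.resolve_left hlt)).symm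
  by_contra! hne
  have hthree : ∀ {a b c : 𝕜}, a ∈ s → c ∈ s → f a = f b → f b = f c → a < b → b < c → False :=
    fun ha hc hab hbc h1 h2 => by
      simpa [← hab, ← hbc] using hf.lt_max_of_lt_of_lt ha hc h1 h2
  rcases hne.1.lt_or_gt with hzx | hxz
  · exact hthree hz hy (hfz.trans hfx.symm) (hfx.trans hfy.symm) hzx hlt
  rcases hne.2.lt_or_gt with hzy | hyz
  · exact hthree hx hy (hfx.trans hfz.symm) (hfz.trans hfy.symm) hxz hzy
  · exact hthree hx hz (hfx.trans hfy.symm) (hfy.trans hfz.symm) hlt hyz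

theorem StrictMonoOn.sub_div_sub_pos {α β : Type*} [LinearOrder α] [Field β] [LinearOrder β]
    [IsStrictOrderedRing β] {s : Set α} {f k : α → β} (hf : StrictMonoOn f s)
    (hk : StrictMonoOn k s) {x y : α} (hx : x ∈ s) (hy : y ∈ s) (hxy : x ≠ y) :
    0 < (f x - f y) / (k x - k y) := by
  rcases hxy.lt_or_gt with h | h
  · exact div_pos_of_neg_of_neg (sub_neg.2 (hf hx hy h)) (sub_neg.2 (hk hx hy h))
  · exact div_pos (sub_pos.2 (hf hy hx h)) (sub_pos.2 (hk hy hx h))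

theorem deriv_deriv_eq_of_eqOn {𝕜 F : Type*} [NontriviallyNormedField 𝕜] [NormedAddCommGroup F]
    [NormedSpace 𝕜 F] {s : Set 𝕜} (hs : IsOpen s) {g G G' : 𝕜 → F} {x : 𝕜} {G'' : F}
    (hx : x ∈ s) (hgG : EqOn g G s) (hG : ∀ y ∈ s, HasDerivAt G (G' y) y)
    (hG' : HasDerivAt G' G'' x) : deriv (deriv g) x = G'' := by
  have hderiv : EqOn (deriv g) G' s := fun y hy => by
    rw [(hgG.eventuallyEq_of_mem (hs.mem_nhds hy)).deriv_eq, (hG y hy).deriv]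
  rw [(hderiv.eventuallyEq_of_mem (hs.mem_nhds hx)).deriv_eq, hG'.deriv]

theorem hasDerivAt_enth (γ : ℝ) {ρ : ℝ} (hρ : 0 < ρ) :
    HasDerivAt (enth γ) (γ * ρ ^ (γ - 2)) ρ := by
  by_cases hγ : γ = 1
  · subst hγ
    have : enth 1 = log := funext fun ρ => if_pos rfl
    rw [this]
    refine (hasDerivAt_log hρ.ne').congr_deriv ?_
    norm_num [rpow_neg_one]
  · have : enth γ = fun ρ => γ / (γ - 1) * ρ ^ (γ - 1) := funext fun ρ => if_neg hγ
    rw [this]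
    refine ((hasDerivAt_rpow_const (Or.inl hρ.ne')).const_mul (γ / (γ - 1))).congr_deriv ?_
    field_simp [sub_ne_zero.2 hγ]
    ring_nf

theorem enth_strictMonoOn {γ : ℝ} (hγ : 0 < γ) : StrictMonoOn (enth γ) (Ioi 0) :=
  strictMonoOn_of_deriv_pos (convex_Ioi 0)
    (fun ρ hρ => (hasDerivAt_enth γ hρ).continuousAt.continuousWithinAt) fun ρ hρ => by
      rw [interior_Ioi] at hρ
      rw [(hasDerivAt_enth γ hρ).deriv]
      exact mul_pos hγ (rpow_pos_of_pos hρ _)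

theorem hasDerivAt_enth_sq (γ : ℝ) {V : ℝ} (hV : V ≠ 0) :
    HasDerivAt (fun V => enth γ (V ^ 2)) (2 * γ * V * (V ^ 2) ^ (γ - 2)) V := by
  refine ((hasDerivAt_enth γ (by positivity)).comp V (hasDerivAt_pow 2 V)).congr_deriv ?_
  push_cast
  ring

theorem hasDerivAt_const_div_pow {𝕜 : Type*} [NontriviallyNormedField 𝕜] (C : 𝕜) (n : ℕ)
    {V : 𝕜} (hV : V ≠ 0) :
    HasDerivAt (fun V => C / V ^ n) (-n * C / V ^ (n + 1)) V := by
  refine ((hasDerivAt_const V C).div (hasDerivAt_pow n V) (pow_ne_zero n hV)).congr_deriv ?_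
  cases n with
  | zero => simp
  | succ n =>
    field_simp
    push_cast
    ring

theorem enth_sq_strictMonoOn {γ : ℝ} (hγ : 0 < γ) :
    StrictMonoOn (fun V => enth γ (V ^ 2)) (Ioi 0) := fun V (hV : 0 < V) W (hW : 0 < W) hVW =>
  enth_strictMonoOn hγ (pow_pos hV 2) (pow_pos hW 2) (pow_lt_pow_left₀ hVW hV.le two_ne_zero)

noncomputable def profile (γ C B V : ℝ) : ℝ := (C / V ^ 4 + enth γ (V ^ 2) - B) * V

noncomputable def profileDeriv (γ C B V : ℝ) : ℝ :=
  -3 * C / V ^ 4 + enth γ (V ^ 2) + 2 * γ * (V ^ 2) ^ (γ - 1) - B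

theorem hasDerivAt_profile (γ C B : ℝ) {V : ℝ} (hV : V ≠ 0) :
    HasDerivAt (profile γ C B) (profileDeriv γ C B V) V := by
  refine ((((hasDerivAt_const_div_pow C 4 hV).add (hasDerivAt_enth_sq γ hV)).sub_const B).mul
    (hasDerivAt_id V)).congr_deriv ?_
  have hpow : (V ^ 2) ^ (γ - 1) = (V ^ 2) ^ (γ - 2) * V ^ 2 := by
    rw [← rpow_add_one (pow_ne_zero 2 hV)]
    ring_nf
  simp only [profileDeriv, hpow, Pi.add_apply, id_eq]
  field_simp
  ring

theorem hasDerivAt_profileDeriv (γ C B : ℝ) {V : ℝ} (hV : V ≠ 0) :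
    HasDerivAt (profileDeriv γ C B)
      (12 * C / V ^ 5 + 2 * γ * (2 * γ - 1) * V * (V ^ 2) ^ (γ - 2)) V := by
  have hrpow := (hasDerivAt_pow 2 V).rpow_const (p := γ - 1) (Or.inl (pow_ne_zero 2 hV))
  refine ((((hasDerivAt_const_div_pow (-3 * C) 4 hV).add (hasDerivAt_enth_sq γ hV)).add
    (hrpow.const_mul (2 * γ))).sub_const B).congr_deriv ?_
  ring_nf

/-- Properties of the nonlinear-viscosity profile nonlinearity `g`: the end states
`V⁺, V⁻` are its only positive zeros and it is strictly convex on `(0,∞)`. -/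
theorem g_zeros_and_convexity
    (γ Vp Vm : ℝ) (hγ : 1 ≤ γ) (hVp : 0 < Vp) (hVm : 0 < Vm) (hne : Vp ≠ Vm)
    (g : ℝ → ℝ)
    (hg : ∀ V : ℝ, 0 < V →
      g V = (((Vp * Vm) ^ 4 / V ^ 4) *
          ((enth γ (Vp ^ 2) - enth γ (Vm ^ 2)) / (Vp ^ 4 - Vm ^ 4)) +
          enth γ (V ^ 2) -
          (Vp ^ 4 * enth γ (Vp ^ 2) - Vm ^ 4 * enth γ (Vm ^ 2)) / (Vp ^ 4 - Vm ^ 4)) * V) :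
    g Vp = 0 ∧ g Vm = 0 ∧
    (∀ V : ℝ, 0 < V → 0 < deriv (deriv g) V) ∧
    (∀ V : ℝ, 0 < V → g V = 0 → V = Vp ∨ V = Vm) := by
  have hpow : StrictMonoOn (fun V : ℝ => V ^ 4) (Ioi 0) :=
    (pow_left_strictMonoOn₀ four_ne_zero).mono Ioi_subset_Ici_self
  have hD : Vp ^ 4 - Vm ^ 4 ≠ 0 := sub_ne_zero.2 fun h => hne (hpow.injOn hVp hVm h)
  have hgVp : g Vp = 0 := by
    rw [hg Vp hVp]
    field_simp
    ring
  have hgVm : g Vm = 0 := by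
    rw [hg Vm hVm]
    field_simp
    ring
  set A := (enth γ (Vp ^ 2) - enth γ (Vm ^ 2)) / (Vp ^ 4 - Vm ^ 4)
  set B := (Vp ^ 4 * enth γ (Vp ^ 2) - Vm ^ 4 * enth γ (Vm ^ 2)) / (Vp ^ 4 - Vm ^ 4)
  have hA : 0 < A := (enth_sq_strictMonoOn (by linarith)).sub_div_sub_pos hpow hVp hVm hne
  have hgprofile : EqOn g (profile γ ((Vp * Vm) ^ 4 * A) B) (Ioi 0) := fun V hV => by
    rw [hg V hV, profile]
    ring
  have hg'' : ∀ V : ℝ, 0 < V → 0 < deriv (deriv g) V := fun V hV => by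
    rw [deriv_deriv_eq_of_eqOn isOpen_Ioi hV hgprofile
      (fun W hW => hasDerivAt_profile _ _ _ hW.ne') (hasDerivAt_profileDeriv _ _ _ hV.ne')]
    have hcoef : 0 < 2 * γ * (2 * γ - 1) := by nlinarith
    positivity
  have hconv : StrictConvexOn ℝ (Ioi 0) g :=
    strictConvexOn_of_deriv2_pos' (convex_Ioi 0) (ContinuousOn.congr (fun V hV =>
      (hasDerivAt_profile _ _ _ (ne_of_gt hV)).continuousAt.continuousWithinAt) hgprofile) hg''
  exact ⟨hgVp, hgVm, hg'', fun V hV hgV =>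
    hconv.eq_or_eq_of_apply_eq hVp hVm hV hne hgVp hgVm hgV⟩
end

section
/- Let γ ≥ 1, s ∈ ℝ, and P⁺, P⁻ > 0 with P⁺ ≠ P⁻, and set d = sqrt( P⁺P⁻ · ((P⁺)^γ - (P⁻)^γ)/(P⁺ - P⁻) ) > 0. Then a pair (J⁺, J⁻) ∈ ℝ² satisfies the Rankine–Hugoniot conditions if and only if either J⁺ = sP⁺ + d and J⁻ = sP⁻ + d, or J⁺ = sP⁺ - d and J⁻ = sP⁻ - d. -/
open Real

/-!
In the frame moving with the shock the mass flux `u = J⁺ - sP⁺ = J⁻ - sP⁻` is the same on both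
sides (first condition), and substituting `J± = sP± + u` into the second condition cancels every
term involving `s`, leaving `u² (P⁻ - P⁺) / (P⁺P⁻) + (P⁺)^γ - (P⁻)^γ = 0`, i.e. `u² = d²`.
The radicand defining `d` is positive because `P ↦ P^γ` is strictly increasing, so `u = ±d`.
-/

theorem rankine_hugoniot_iff_flux_sq {Pp Pm pp pm s Jp Jm : ℝ} (hPp : Pp ≠ 0) (hPm : Pm ≠ 0)
    (hne : Pp ≠ Pm) :
    (Jp - Jm = s * (Pp - Pm) ∧ (Jp ^ 2 / Pp + pp) - (Jm ^ 2 / Pm + pm) = s * (Jp - Jm)) ↔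
      (Jm - s * Pm = Jp - s * Pp ∧ (Jp - s * Pp) ^ 2 = Pp * Pm * ((pp - pm) / (Pp - Pm))) := by
  constructor
  · rintro ⟨hjump, hmom⟩
    obtain rfl : Jm = Jp - s * Pp + s * Pm := by linarith
    refine ⟨by ring, ?_⟩
    field_simp at hmom ⊢
    linear_combination -hmom
  · rintro ⟨hflux, hsq⟩
    obtain rfl : Jm = Jp - s * Pp + s * Pm := by linarith
    refine ⟨by ring, ?_⟩
    field_simp at hsq ⊢
    linear_combination -hsq

/-- Given end states `0 < P⁺ ≠ P⁻ > 0` and speed `s`, the momenta `(J⁺, J⁻)` satisfy the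
Rankine–Hugoniot conditions if and only if `J± = sP± + d` or `J± = sP± - d`, where
`d = √(P⁺P⁻·((P⁺)^γ-(P⁻)^γ)/(P⁺-P⁻))`. -/
theorem rankine_hugoniot_momenta_characterization
    (γ s Pp Pm : ℝ) (hγ : 1 ≤ γ) (hPp : 0 < Pp) (hPm : 0 < Pm) (hne : Pp ≠ Pm)
    (d : ℝ) (hd : d = Real.sqrt (Pp * Pm * ((Pp ^ γ - Pm ^ γ) / (Pp - Pm)))) :
    ∀ Jp Jm : ℝ,
      (Jp - Jm = s * (Pp - Pm) ∧
        (Jp ^ 2 / Pp + Pp ^ γ) - (Jm ^ 2 / Pm + Pm ^ γ) = s * (Jp - Jm)) ↔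
      ((Jp = s * Pp + d ∧ Jm = s * Pm + d) ∨ (Jp = s * Pp - d ∧ Jm = s * Pm - d)) := by
  intro Jp Jm
  have hslope : 0 < (Pp ^ γ - Pm ^ γ) / (Pp - Pm) := by
    simpa only [slope_def_field] using
      (strictMonoOn_rpow_Ici_of_exponent_pos (by linarith)).slope_pos
        (Set.mem_Ici.mpr hPm.le) (Set.mem_Ici.mpr hPp.le) hne.symm
  have hd_sq : d ^ 2 = Pp * Pm * ((Pp ^ γ - Pm ^ γ) / (Pp - Pm)) :=
    hd ▸ sq_sqrt (by positivity)
  rw [rankine_hugoniot_iff_flux_sq hPp.ne' hPm.ne' hne, ← hd_sq, sq_eq_sq_iff_eq_or_eq_neg]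
  constructor
  · rintro ⟨hflux, h | h⟩
    · exact .inl ⟨by linarith, by linarith⟩
    · exact .inr ⟨by linarith, by linarith⟩
  · rintro (⟨h₁, h₂⟩ | ⟨h₁, h₂⟩)
    · exact ⟨by linarith, .inl (by linarith)⟩
    · exact ⟨by linarith, .inr (by linarith)⟩
end

section
/- Let γ ≥ 1, s ∈ ℝ, and 0 < P⁺ < P⁻, set d = sqrt( P⁺P⁻ · ((P⁺)^γ - (P⁻)^γ)/(P⁺ - P⁻) ), and define J± = sP± - d and u± = J±/P±. Then the Lax 2-shock conditions hold: u⁺ + c_s(P⁺) < s < u⁻ + c_s(P⁻); equivalently, c_s(P⁺) < d/P⁺ and d/P⁻ < c_s(P⁻). -/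
open Real

/-- Convexity of `x ^ γ` via Bernoulli: tangent line at `a` lies below the graph. -/
lemma rpow_tangent_le {γ a b : ℝ} (hγ : 1 ≤ γ) (ha : 0 < a) (hb : 0 < b) :
    γ * a ^ (γ - 1) * (b - a) ≤ b ^ γ - a ^ γ := by
  have hba : (0:ℝ) < b / a := div_pos hb ha
  have key : 1 + γ * (b / a - 1) ≤ (b / a) ^ γ := by
    simpa using one_add_mul_self_le_rpow_one_add (by linarith : (-1:ℝ) ≤ b / a - 1) hγ
  have hdiv : (b / a) ^ γ = b ^ γ / a ^ γ := Real.div_rpow hb.le ha.le γ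
  have ha1 : a ^ (γ - 1) = a ^ γ / a := by
    rw [Real.rpow_sub ha, Real.rpow_one]
  have haγ : (0:ℝ) < a ^ γ := Real.rpow_pos_of_pos ha γ
  rw [hdiv] at key
  have k2 : (1 + γ * (b / a - 1)) * (a ^ γ * a) ≤ b ^ γ / a ^ γ * (a ^ γ * a) :=
    mul_le_mul_of_nonneg_right key (by positivity)
  have e1 : b ^ γ / a ^ γ * (a ^ γ * a) = b ^ γ * a := by field_simp
  have e2 : (1 + γ * (b / a - 1)) * (a ^ γ * a) = (a + γ * (b - a)) * a ^ γ := by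
    field_simp
  rw [e1, e2] at k2
  rw [ha1]
  have h3 : γ * (a ^ γ / a) * (b - a) = γ * a ^ γ * (b - a) / a := by ring
  rw [h3, div_le_iff₀ ha]
  nlinarith [k2]

/-- For `0 < P⁺ < P⁻` and `J± = sP± - d`, the discontinuity satisfies the Lax 2-shock
conditions `u⁺ + c_s(P⁺) < s < u⁻ + c_s(P⁻)`. -/
theorem momenta_minus_branch_is_lax2_shock
    (γ s Pp Pm : ℝ) (hγ : 1 ≤ γ) (hPp : 0 < Pp) (hlt : Pp < Pm)
    (d : ℝ) (hd : d = Real.sqrt (Pp * Pm * ((Pp ^ γ - Pm ^ γ) / (Pp - Pm))))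
    (Jp Jm up um : ℝ)
    (hJp : Jp = s * Pp - d) (hJm : Jm = s * Pm - d)
    (hup : up = Jp / Pp) (hum : um = Jm / Pm) :
    up + Real.sqrt (γ * Pp ^ (γ - 1)) < s ∧ s < um + Real.sqrt (γ * Pm ^ (γ - 1)) := by
  have hPm : 0 < Pm := hPp.trans hlt
  have hγ0 : (0:ℝ) < γ := by linarith
  have hpow : Pp ^ γ < Pm ^ γ := Real.rpow_lt_rpow hPp.le hlt hγ0
  have hPpγ : (0:ℝ) < Pp ^ γ := Real.rpow_pos_of_pos hPp γ
  have hPmγ : (0:ℝ) < Pm ^ γ := Real.rpow_pos_of_pos hPm γ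
  have hPp1 : (0:ℝ) < Pp ^ (γ - 1) := Real.rpow_pos_of_pos hPp _
  have hPm1 : (0:ℝ) < Pm ^ (γ - 1) := Real.rpow_pos_of_pos hPm _
  have hPpγ' : Pp ^ γ = Pp ^ (γ - 1) * Pp := by
    rw [Real.rpow_sub hPp, Real.rpow_one, div_mul_cancel₀ _ hPp.ne']
  have hPmγ' : Pm ^ γ = Pm ^ (γ - 1) * Pm := by
    rw [Real.rpow_sub hPm, Real.rpow_one, div_mul_cancel₀ _ hPm.ne']
  set A : ℝ := Pp * Pm * ((Pp ^ γ - Pm ^ γ) / (Pp - Pm)) with hA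
  have hsub : Pp - Pm < 0 := by linarith
  have hA' : A = Pp * Pm * ((Pm ^ γ - Pp ^ γ) / (Pm - Pp)) := by
    rw [hA]
    congr 1
    rw [div_eq_div_iff (by linarith) (by linarith)]
    ring
  -- tangent line bounds
  have t1 : γ * Pp ^ (γ - 1) * (Pm - Pp) ≤ Pm ^ γ - Pp ^ γ := rpow_tangent_le hγ hPp hPm
  have t2 : γ * Pm ^ (γ - 1) * (Pp - Pm) ≤ Pp ^ γ - Pm ^ γ := rpow_tangent_le hγ hPm hPp
  -- bounds on A
  have hA'' : A = Pp * Pm * (Pm ^ γ - Pp ^ γ) / (Pm - Pp) := by rw [hA']; ring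
  have hmp : (0:ℝ) < Pm - Pp := by linarith
  have hAlb : Pp ^ 2 * (γ * Pp ^ (γ - 1)) < A := by
    rw [hA'', lt_div_iff₀ hmp]
    nlinarith [mul_le_mul_of_nonneg_left t1 (sq_nonneg Pp),
      mul_lt_mul_of_pos_right (mul_lt_mul_of_pos_left hlt hPp) (sub_pos.mpr hpow)]
  have hAub : A < Pm ^ 2 * (γ * Pm ^ (γ - 1)) := by
    rw [hA'', div_lt_iff₀ hmp]
    have t2' : Pm ^ γ - Pp ^ γ ≤ γ * Pm ^ (γ - 1) * (Pm - Pp) := by nlinarith [t2]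
    nlinarith [mul_le_mul_of_nonneg_left t2' (le_of_lt (mul_pos hPp hPm)),
      mul_lt_mul_of_pos_right (show Pp * Pm < Pm ^ 2 by nlinarith)
        (mul_pos (mul_pos hγ0 hPm1) hmp)]
  -- c_s values
  set cp : ℝ := Real.sqrt (γ * Pp ^ (γ - 1)) with hcp
  set cm : ℝ := Real.sqrt (γ * Pm ^ (γ - 1)) with hcm
  have hcp0 : 0 ≤ cp := Real.sqrt_nonneg _
  have hcm0 : 0 ≤ cm := Real.sqrt_nonneg _
  have hcpsq : cp ^ 2 = γ * Pp ^ (γ - 1) := Real.sq_sqrt (by positivity)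
  have hcmsq : cm ^ 2 = γ * Pm ^ (γ - 1) := Real.sq_sqrt (by positivity)
  -- key inequalities: Pp * cp < d and d < Pm * cm
  have h1 : Pp * cp < d := by
    rw [hd]
    apply Real.lt_sqrt (by positivity) |>.mpr
    calc (Pp * cp) ^ 2 = Pp ^ 2 * (γ * Pp ^ (γ - 1)) := by rw [mul_pow, hcpsq]
      _ < A := hAlb
  have h2 : d < Pm * cm := by
    rw [hd]
    apply Real.sqrt_lt' (by positivity) |>.mpr
    calc A < Pm ^ 2 * (γ * Pm ^ (γ - 1)) := hAub
      _ = (Pm * cm) ^ 2 := by rw [mul_pow, hcmsq]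
  have hup' : up = s - d / Pp := by
    rw [hup, hJp]; field_simp
  have hum' : um = s - d / Pm := by
    rw [hum, hJm]; field_simp
  constructor
  · have : cp < d / Pp := (lt_div_iff₀ hPp).mpr (by linarith [h1])
    rw [hup']; linarith
  · have : d / Pm < cm := (div_lt_iff₀ hPm).mpr (by linarith [h2])
    rw [hum']; linarith
end

section
/- Let γ ≥ 1, s ∈ ℝ, and 0 < P⁺ < P⁻, set d = sqrt( P⁺P⁻ · ((P⁺)^γ - (P⁻)^γ)/(P⁺ - P⁻) ), and define J± = sP± + d and u± = J±/P±. Then the discontinuity (P±, J±, s) is not an admissible Lax shock: it is NOT the case that u⁺ - c_s(P⁺) < s < u⁻ - c_s(P⁻) (Lax 1-shock conditions), and it is NOT the case that u⁺ + c_s(P⁺) < s < u⁻ + c_s(P⁻) (Lax 2-shock conditions). -/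
open Real

/-- For `0 < P⁺ < P⁻` and `J± = sP± + d`, the discontinuity `(P±, J±, s)` is not an
admissible Lax shock: it satisfies neither the Lax 1-shock conditions nor the
Lax 2-shock conditions. -/
theorem momenta_plus_branch_not_admissible
    (γ s Pp Pm : ℝ) (hγ : 1 ≤ γ) (hPp : 0 < Pp) (hlt : Pp < Pm)
    (d : ℝ) (hd : d = Real.sqrt (Pp * Pm * ((Pp ^ γ - Pm ^ γ) / (Pp - Pm))))
    (Jp Jm up um : ℝ)
    (hJp : Jp = s * Pp + d) (hJm : Jm = s * Pm + d)
    (hup : up = Jp / Pp) (hum : um = Jm / Pm) :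
    ¬ (up - Real.sqrt (γ * Pp ^ (γ - 1)) < s ∧ s < um - Real.sqrt (γ * Pm ^ (γ - 1))) ∧
    ¬ (up + Real.sqrt (γ * Pp ^ (γ - 1)) < s ∧ s < um + Real.sqrt (γ * Pm ^ (γ - 1))) := by
  have hPm : 0 < Pm := hPp.trans hlt
  have hdnn : 0 ≤ d := hd ▸ Real.sqrt_nonneg _
  have hcp : 0 ≤ Real.sqrt (γ * Pp ^ (γ - 1)) := Real.sqrt_nonneg _
  have hγ0 : (0:ℝ) < γ := lt_of_lt_of_le one_pos hγ
  -- Bernoulli: Pm^γ + γ Pm^(γ-1)(Pp - Pm) ≤ Pp^γ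
  have hb : 1 + γ * (Pp / Pm - 1) ≤ (1 + (Pp / Pm - 1)) ^ γ := by
    apply one_add_mul_self_le_rpow_one_add _ hγ
    have : 0 < Pp / Pm := div_pos hPp hPm
    linarith
  have hrew : (1 + (Pp / Pm - 1)) = Pp / Pm := by ring
  rw [hrew, Real.div_rpow hPp.le hPm.le] at hb
  have hPmγ : 0 < Pm ^ γ := Real.rpow_pos_of_pos hPm γ
  have hPpγ : 0 < Pp ^ γ := Real.rpow_pos_of_pos hPp γ
  have hPmγ1 : Pm ^ (γ - 1) = Pm ^ γ / Pm := by
    rw [Real.rpow_sub hPm, Real.rpow_one]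
  have hkey : Pm ^ γ - Pp ^ γ ≤ γ * Pm ^ (γ - 1) * (Pm - Pp) := by
    rw [hPmγ1]
    have h1 : (1 + γ * (Pp / Pm - 1)) * Pm ^ γ ≤ (Pp ^ γ / Pm ^ γ) * Pm ^ γ := by
      exact mul_le_mul_of_nonneg_right hb hPmγ.le
    rw [div_mul_cancel₀ _ hPmγ.ne'] at h1
    have : (1 + γ * (Pp / Pm - 1)) * Pm ^ γ = Pm ^ γ + γ * (Pm ^ γ / Pm) * (Pp - Pm) := by
      field_simp
    linarith [this ▸ h1]
  -- ratio bound
  have hratio : Pp * Pm * ((Pp ^ γ - Pm ^ γ) / (Pp - Pm)) ≤ Pm ^ 2 * (γ * Pm ^ (γ - 1)) := by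
    have hne : Pp - Pm ≠ 0 := by linarith
    have heq : (Pp ^ γ - Pm ^ γ) / (Pp - Pm) = (Pm ^ γ - Pp ^ γ) / (Pm - Pp) := by
      rw [div_eq_div_iff hne (by linarith : Pm - Pp ≠ 0)]; ring
    rw [heq]
    have hMm : 0 < Pm - Pp := by linarith
    have hr1 : (Pm ^ γ - Pp ^ γ) / (Pm - Pp) ≤ γ * Pm ^ (γ - 1) := by
      rw [div_le_iff₀ hMm]; linarith
    have hr0 : 0 ≤ (Pm ^ γ - Pp ^ γ) / (Pm - Pp) := by
      apply div_nonneg _ hMm.le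
      have := Real.rpow_le_rpow hPp.le hlt.le hγ0.le
      linarith
    calc Pp * Pm * ((Pm ^ γ - Pp ^ γ) / (Pm - Pp))
        ≤ Pm * Pm * ((Pm ^ γ - Pp ^ γ) / (Pm - Pp)) := by
          apply mul_le_mul_of_nonneg_right _ hr0
          nlinarith
      _ ≤ Pm ^ 2 * (γ * Pm ^ (γ - 1)) := by
          rw [pow_two]
          exact mul_le_mul_of_nonneg_left hr1 (by positivity)
  have hdle : d ≤ Pm * Real.sqrt (γ * Pm ^ (γ - 1)) := by
    rw [hd]
    have hx : Pm * Real.sqrt (γ * Pm ^ (γ - 1)) = Real.sqrt (Pm ^ 2 * (γ * Pm ^ (γ - 1))) := by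
      rw [Real.sqrt_mul (sq_nonneg Pm) (γ * Pm ^ (γ - 1)), Real.sqrt_sq hPm.le]
    rw [hx]
    exact Real.sqrt_le_sqrt hratio
  constructor
  · rintro ⟨_, h2⟩
    rw [hum, hJm] at h2
    have : (s * Pm + d) / Pm = s + d / Pm := by field_simp
    rw [this] at h2
    have : d / Pm ≤ Real.sqrt (γ * Pm ^ (γ - 1)) := (div_le_iff₀ hPm).mpr (by linarith)
    linarith
  · rintro ⟨h1, _⟩
    rw [hup, hJp] at h1
    have heq : (s * Pp + d) / Pp = s + d / Pp := by field_simp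
    rw [heq] at h1
    have : 0 ≤ d / Pp := div_nonneg hdnn hPp.le
    linarith
end
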